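/- arXiv:1807.08506 — 10 statements merged into one kernel-verified Lean document; each statement's English description precedes it below -/
import Mathlib

section
/- Let φ be any property of subsets of ℕ. The following are equivalent: (i) for every k ∈ ℕ there exists a finite set X ⊆ ℕ with at least k elements such that φ(X) holds; (ii) there exist sets R, I ⊆ ℕ with U₂(R, I) such that for every pair of consecutive elements r < r' of R there exists a finite set X ⊆ ℕ such that φ(X) holds and X contains every element of I strictly between r and r'. -/
/-!
Given arbitrarily large finite sets with property `φ`, build `R = {r₀ < r₁ < ⋯}` greedily: once
`rₙ` is fixed, a `φ`-set with more than `2 rₙ` elements has at least `rₙ ≥ n` elements above `rₙ`;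
choose `rₙ₊₁` beyond all of them and put them into `I`. The gaps of `R` then hold the blocks of
`I` one by one, and the `n`-th block has at least `n` elements. Conversely, a `φ`-set covering a
gap with at least `k` elements of `I` has at least `k` elements.
-/

/-- `r < r'` are consecutive elements of `R`. -/
def ConsecutiveIn (R : Set ℕ) (r r' : ℕ) : Prop :=
  r ∈ R ∧ r' ∈ R ∧ r < r' ∧ ∀ x ∈ R, ¬(r < x ∧ x < r')

/-- The gap-count sequence of `(R, I)` is unbounded. -/
def GapUnbounded (R I : Set ℕ) : Prop :=
  ∀ k : ℕ, ∃ r r', ConsecutiveIn R r r' ∧ k ≤ {x ∈ I | r < x ∧ x < r'}.ncard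

/-- The predicate `U₂(R, I)`. -/
def U₂ (R I : Set ℕ) : Prop :=
  R.Infinite ∧ R ∩ I = ∅ ∧ GapUnbounded R I

open Set

theorem ncard_le_add_ncard_inter_Ioo {X : Set ℕ} {a b : ℕ} (hX : X ⊆ Iio b) :
    X.ncard ≤ a + 1 + (X ∩ Ioo a b).ncard := by
  have hlow : X \ Ioo a b ⊆ Iic a := fun x ⟨hxX, hx⟩ => by
    have := hX hxX
    simp only [mem_Ioo, mem_Iio, mem_Iic] at *
    omega
  have hsplit := ncard_inter_add_ncard_sdiff_eq_ncard X (Ioo a b) ((finite_Iio b).subset hX)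
  have := ncard_le_ncard hlow (finite_Iic a)
  rw [ncard_Iic_nat] at this
  omega

theorem exists_finite_ncard_inter_Ioo_ge {φ : Set ℕ → Prop}
    (h : ∀ k : ℕ, ∃ X : Set ℕ, X.Finite ∧ k ≤ X.ncard ∧ φ X) (a k : ℕ) :
    ∃ b X, a < b ∧ X.Finite ∧ φ X ∧ k ≤ (X ∩ Ioo a b).ncard := by
  obtain ⟨X, hfin, hcard, hφ⟩ := h (a + 1 + k)
  obtain ⟨m, hm⟩ := hfin.bddAbove
  have hX : X ⊆ Iio (max (a + 1) (m + 1)) := fun x hx =>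
    lt_max_of_lt_right (Nat.lt_succ_of_le (hm hx))
  refine ⟨max (a + 1) (m + 1), X, lt_max_of_lt_left (Nat.lt_succ_self a), hfin, hφ, ?_⟩
  have := ncard_le_add_ncard_inter_Ioo (a := a) hX
  omega

section StrictMono

variable {r : ℕ → ℕ}

theorem StrictMono.eq_of_mem_Ioo (hr : StrictMono r) {x m n : ℕ}
    (hm : x ∈ Ioo (r m) (r (m + 1))) (hn : x ∈ Ioo (r n) (r (n + 1))) : m = n := by
  have h₁ := hr.lt_iff_lt.1 (hm.1.trans hn.2)
  have h₂ := hr.lt_iff_lt.1 (hn.1.trans hm.2)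
  omega

theorem StrictMono.apply_notMem_Ioo (hr : StrictMono r) (k n : ℕ) :
    r k ∉ Ioo (r n) (r (n + 1)) := fun ⟨h₁, h₂⟩ => by
  have := hr.lt_iff_lt.1 h₁
  have := hr.lt_iff_lt.1 h₂
  omega

theorem consecutiveIn_range_iff (hr : StrictMono r) {a b : ℕ} :
    ConsecutiveIn (range r) a b ↔ ∃ n, a = r n ∧ b = r (n + 1) := by
  constructor
  · rintro ⟨⟨n, rfl⟩, ⟨m, rfl⟩, hlt, hgap⟩
    refine ⟨n, rfl, congrArg r ?_⟩
    have hnm := hr.lt_iff_lt.1 hlt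
    by_contra hne
    exact hgap _ ⟨n + 1, rfl⟩ ⟨hr (Nat.lt_succ_self n), hr (by omega)⟩
  · rintro ⟨n, rfl, rfl⟩
    exact ⟨⟨n, rfl⟩, ⟨n + 1, rfl⟩, hr (Nat.lt_succ_self n),
      fun _ ⟨k, hk⟩ hmem => hk ▸ hr.apply_notMem_Ioo k n <| hk ▸ hmem⟩

variable {B : ℕ → Set ℕ}

theorem sep_iUnion_Ioo_eq (hr : StrictMono r) (hB : ∀ n, B n ⊆ Ioo (r n) (r (n + 1))) (n : ℕ) :
    {x ∈ ⋃ m, B m | r n < x ∧ x < r (n + 1)} = B n := by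
  ext x
  simp only [mem_ofPred_eq, mem_iUnion]
  constructor
  · rintro ⟨⟨m, hxm⟩, hx⟩
    exact hr.eq_of_mem_Ioo (hB m hxm) hx ▸ hxm
  · intro hx
    exact ⟨⟨n, hx⟩, hB n hx⟩

theorem u₂_range_iUnion (hr : StrictMono r) (hB : ∀ n, B n ⊆ Ioo (r n) (r (n + 1)))
    (hlarge : ∀ k, ∃ n, k ≤ (B n).ncard) : U₂ (range r) (⋃ n, B n) := by
  refine ⟨infinite_range_of_injective hr.injective, ?_, fun k => ?_⟩
  · refine eq_empty_of_forall_notMem fun x ⟨⟨k, hk⟩, hx⟩ => ?_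
    obtain ⟨n, hn⟩ := mem_iUnion.1 hx
    exact hr.apply_notMem_Ioo k n (hk ▸ hB n hn)
  · obtain ⟨n, hn⟩ := hlarge k
    exact ⟨r n, r (n + 1), (consecutiveIn_range_iff hr).2 ⟨n, rfl, rfl⟩,
      (sep_iUnion_Ioo_eq hr hB n).symm ▸ hn⟩

end StrictMono

theorem stmt0 (φ : Set ℕ → Prop) :
    (∀ k : ℕ, ∃ X : Set ℕ, X.Finite ∧ k ≤ X.ncard ∧ φ X) ↔
      (∃ R I : Set ℕ, U₂ R I ∧
        ∀ r r', ConsecutiveIn R r r' →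
          ∃ X : Set ℕ, X.Finite ∧ φ X ∧ ∀ x ∈ I, r < x → x < r' → x ∈ X) := by
  constructor
  · intro h
    choose next X hnext hfin hφ hcard using fun a => exists_finite_ncard_inter_Ioo_ge h a a
    set r : ℕ → ℕ := fun n => next^[n] 0
    have hsucc (n : ℕ) : r (n + 1) = next (r n) := Function.iterate_succ_apply' next n 0
    have hr : StrictMono r := strictMono_nat_of_lt_succ fun n => hsucc n ▸ hnext (r n)
    set B : ℕ → Set ℕ := fun n => X (r n) ∩ Ioo (r n) (r (n + 1))
    have hB (n : ℕ) : B n ⊆ Ioo (r n) (r (n + 1)) := inter_subset_right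
    have hlarge (k : ℕ) : k ≤ (B k).ncard := by
      have := hcard (r k)
      rw [← hsucc] at this
      exact hr.le_apply.trans this
    refine ⟨range r, ⋃ n, B n, u₂_range_iUnion hr hB fun k => ⟨k, hlarge k⟩, fun a b hab => ?_⟩
    obtain ⟨n, rfl, rfl⟩ := (consecutiveIn_range_iff hr).1 hab
    exact ⟨X (r n), hfin _, hφ _, fun x hx h₁ h₂ =>
      ((sep_iUnion_Ioo_eq hr hB n).subset ⟨hx, h₁, h₂⟩).1⟩
  · rintro ⟨R, I, ⟨-, -, hgap⟩, hcover⟩ k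
    obtain ⟨a, b, hab, hk⟩ := hgap k
    obtain ⟨X, hfin, hφ, hsub⟩ := hcover a b hab
    exact ⟨X, hfin, hk.trans (ncard_le_ncard (fun x hx => hsub x hx.1 hx.2.1 hx.2.2) hfin), hφ⟩
end

section
/- Let v be a vector sequence. Then dim v is unbounded if and only if at least one of the following holds: (1) there exists a sub-extraction w of v such that w tends to infinity and dim w is unbounded; (2) there exists an interval-closed sub-extraction w of v such that w is bounded and dim w is unbounded. -/
/-- `dim v` is unbounded. -/
def DimUnbounded (v : ℕ → List ℕ) : Prop :=
  ∀ k : ℕ, ∃ i, k ≤ (v i).length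

/-- `v` tends to infinity: each value occurs as a coordinate in finitely many vectors. -/
def TendsToInfinity (v : ℕ → List ℕ) : Prop :=
  ∀ n : ℕ, {i | n ∈ v i}.Finite

/-- `w` is a sub-extraction of `v`: an extraction of a sub-sequence of `v`. -/
def SubExtraction (v w : ℕ → List ℕ) : Prop :=
  ∃ σ : ℕ → ℕ, StrictMono σ ∧ ∀ i, (w i).Sublist (v (σ i)) ∧ w i ≠ []

/-- `w` is an interval-closed sub-extraction of `v`: each vector of `w` is a nonempty
contiguous (infix) sublist of the corresponding vector of a sub-sequence of `v`. -/
def IntervalClosedSubExtraction (v w : ℕ → List ℕ) : Prop :=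
  ∃ σ : ℕ → ℕ, StrictMono σ ∧ ∀ i, (w i) <:+: (v (σ i)) ∧ w i ≠ []

/-- All coordinates of `w` are bounded by a common bound. -/
def BoundedVecSeq (w : ℕ → List ℕ) : Prop :=
  ∃ B : ℕ, ∀ i, ∀ x ∈ w i, x ≤ B

/-!
If the vectors of `v` contain arbitrarily long runs of coordinates bounded by a fixed `B`, these
runs form a bounded interval-closed sub-extraction of unbounded dimension. Otherwise, for every
`m` the runs of coordinates `≤ m` have length `< K m`, so a vector of length `L` has at least
`L / K m - 1` coordinates `> m`. Keeping, in a suitable `m`-th vector, only the coordinates `> m`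
gives a sub-extraction that tends to infinity and still has unbounded dimension.
-/

open Filter

lemma List.length_lt_mul_of_forall_infix_length_lt {α : Type*} (p : α → Prop) [DecidablePred p]
    {K : ℕ} (l : List α) (h : ∀ t, t <:+: l → (∀ x ∈ t, ¬ p x) → t.length < K) :
    l.length < ((l.filter (fun x => p x)).length + 1) * K := by
  -- `s` is the `p`-free run preceding `l`.
  suffices key : ∀ s : List α, (∀ x ∈ s, ¬ p x) →
      (∀ t, t <:+: s ++ l → (∀ x ∈ t, ¬ p x) → t.length < K) →
      (s ++ l).length < (((s ++ l).filter (fun x => p x)).length + 1) * K from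
    key [] (by simp) h
  clear h
  induction l with
  | nil =>
    intro s hs h
    simpa using (h s (by simp) hs).trans_le (Nat.le_mul_of_pos_left K (Nat.succ_pos _))
  | cons a l ih =>
    intro s hs h
    by_cases ha : p a
    · have hsK : s.length < K := h s (List.infix_append [] s (a :: l)) hs
      have hl := ih [] (by simp) fun t ht ↦ h t (ht.trans (List.infix_append (s ++ [a]) l []
        |>.trans (by simp)))
      have hs_filter : s.filter (fun x => p x) = [] := List.filter_eq_nil_iff.mpr (by simpa)
      simp only [List.nil_append] at hl
      simp only [List.length_append, List.length_cons, List.filter_append, hs_filter,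
        List.filter_cons, ha, decide_true, if_true, List.nil_append]
      nlinarith
    · simpa using ih (s ++ [a]) (by simpa [or_imp, forall_and] using ⟨hs, ha⟩) (by simpa using h)

lemma Nat.frequently_atTop_of_forall_exists_le {f : ℕ → ℕ} {P : ℕ → Prop}
    (h : ∀ k, ∃ i, k ≤ f i ∧ P i) : ∃ᶠ i in atTop, P i := by
  rw [Nat.frequently_atTop_iff_infinite]
  intro hfin
  obtain ⟨B, hB⟩ := (hfin.image f).bddAbove
  obtain ⟨i, hi, hPi⟩ := h (B + 1)
  have : f i ≤ B := hB ⟨i, hPi, rfl⟩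
  omega

lemma IntervalClosedSubExtraction.subExtraction {v w : ℕ → List ℕ}
    (h : IntervalClosedSubExtraction v w) : SubExtraction v w :=
  let ⟨σ, hσ, hw⟩ := h
  ⟨σ, hσ, fun i ↦ ⟨(hw i).1.sublist, (hw i).2⟩⟩

lemma SubExtraction.dimUnbounded {v w : ℕ → List ℕ} (h : SubExtraction v w)
    (hw : DimUnbounded w) : DimUnbounded v := by
  obtain ⟨σ, -, hσ⟩ := h
  intro k
  obtain ⟨i, hi⟩ := hw k
  exact ⟨σ i, hi.trans (hσ i).1.length_le⟩

lemma exists_intervalClosedSubExtraction_bounded {v : ℕ → List ℕ} (B : ℕ)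
    (hB : ∀ K, ∃ i t, t <:+: v i ∧ (∀ x ∈ t, x ≤ B) ∧ K ≤ t.length) :
    ∃ w, IntervalClosedSubExtraction v w ∧ BoundedVecSeq w ∧ DimUnbounded w := by
  have hfreq (m : ℕ) : ∃ᶠ i in atTop, ∃ t, t <:+: v i ∧ (∀ x ∈ t, x ≤ B) ∧ m < t.length := by
    refine Nat.frequently_atTop_of_forall_exists_le (f := fun i ↦ (v i).length) fun k ↦ ?_
    obtain ⟨i, t, ht, htB, hlen⟩ := hB (max k (m + 1))
    exact ⟨i, (le_of_max_le_left hlen).trans ht.length_le, t, ht, htB, by omega⟩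
  obtain ⟨σ, hσ, hσt⟩ := extraction_forall_of_frequently hfreq
  choose t ht htB hlen using hσt
  exact ⟨t, ⟨σ, hσ, fun i ↦ ⟨ht i, List.ne_nil_of_length_pos (Nat.zero_lt_of_lt (hlen i))⟩⟩, ⟨B, htB⟩,
    fun k ↦ ⟨k, (hlen k).le⟩⟩

lemma exists_subExtraction_tendsToInfinity {v : ℕ → List ℕ} (hv : DimUnbounded v)
    (hruns : ∀ B, ∃ K, ∀ i t, t <:+: v i → (∀ x ∈ t, x ≤ B) → t.length < K) :
    ∃ w, SubExtraction v w ∧ TendsToInfinity w ∧ DimUnbounded w := by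
  have hfreq (m : ℕ) : ∃ᶠ i in atTop, m < ((v i).filter (m < ·)).length := by
    obtain ⟨K, hK⟩ := hruns m
    refine Nat.frequently_atTop_of_forall_exists_le (f := fun i ↦ (v i).length) fun k ↦ ?_
    obtain ⟨i, hi⟩ := hv (max k ((m + 1) * K))
    have hlt := (v i).length_lt_mul_of_forall_infix_length_lt (m < ·)
      fun t ht htm ↦ hK i t ht fun x hx ↦ not_lt.mp (htm x hx)
    refine ⟨i, le_of_max_le_left hi, ?_⟩
    have := Nat.lt_of_mul_lt_mul_right ((le_of_max_le_right hi).trans_lt hlt)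
    omega
  obtain ⟨σ, hσ, hσm⟩ := extraction_forall_of_frequently hfreq
  refine ⟨fun m ↦ (v (σ m)).filter (m < ·), ⟨σ, hσ, fun m ↦ ⟨List.filter_sublist, ?_⟩⟩, ?_,
    fun k ↦ ⟨k, (hσm k).le⟩⟩
  · exact List.ne_nil_of_length_pos (Nat.zero_lt_of_lt (hσm m))
  · intro n
    refine (Set.finite_Iio n).subset fun i hi ↦ ?_
    simpa using (List.mem_filter.mp hi).2

theorem stmt1 (v : ℕ → List ℕ) :
    DimUnbounded v ↔
      ((∃ w : ℕ → List ℕ, SubExtraction v w ∧ TendsToInfinity w ∧ DimUnbounded w) ∨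
        (∃ w : ℕ → List ℕ, IntervalClosedSubExtraction v w ∧ BoundedVecSeq w ∧
          DimUnbounded w)) := by
  constructor
  · intro hv
    by_cases hB : ∃ B, ∀ K, ∃ i t, t <:+: v i ∧ (∀ x ∈ t, x ≤ B) ∧ K ≤ t.length
    · obtain ⟨B, hB⟩ := hB
      exact Or.inr (exists_intervalClosedSubExtraction_bounded B hB)
    · push Not at hB
      exact Or.inl (exists_subExtraction_tendsToInfinity hv hB)
  · rintro (⟨w, hw, -, hdim⟩ | ⟨w, hw, -, hdim⟩)
    · exact hw.dimUnbounded hdim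
    · exact hw.subExtraction.dimUnbounded hdim
end

section
/- Let v be a vector sequence all of whose coordinates are positive and which tends to infinity. Then dim v is unbounded if and only if there exist a sub-sequence h of v and a strict extraction g of h such that for every vector sequence h' dominated by h there exists a vector sequence g' dominated by g such that h' is an asymptotic mix of g'. -/
/-- `a` is a 1-extraction of `v`: for every `i`, `a i` is a coordinate of `v i`. -/
def OneExtraction (v : ℕ → List ℕ) (a : ℕ → ℕ) : Prop :=
  ∀ i, a i ∈ v i

/-- `a` is bounded on `S`. -/
def BoundedOn (a : ℕ → ℕ) (S : Set ℕ) : Prop :=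
  ∃ B : ℕ, ∀ i ∈ S, a i ≤ B

/-- `a` and `b` are asymptotically equivalent. -/
def AsympEquiv (a b : ℕ → ℕ) : Prop :=
  ∀ S : Set ℕ, BoundedOn a S ↔ BoundedOn b S

/-- `u` is an asymptotic mix of `w`. -/
def AsympMix (u w : ℕ → List ℕ) : Prop :=
  ∀ a : ℕ → ℕ, OneExtraction u a → ∃ b : ℕ → ℕ, OneExtraction w b ∧ AsympEquiv a b

/-- `w` dominates `u`: pointwise the lists have equal lengths, `u i` is coordinatewise
at most `w i`, and all coordinates of both are positive. -/
def Dominates (w u : ℕ → List ℕ) : Prop :=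
  ∀ i, List.Forall₂ (· ≤ ·) (u i) (w i) ∧ (∀ x ∈ u i, 0 < x) ∧ (∀ x ∈ w i, 0 < x)

open Filter Set

theorem AsympEquiv.symm {a b : ℕ → ℕ} (h : AsympEquiv a b) : AsympEquiv b a :=
  fun S => (h S).symm

theorem AsympEquiv.trans {a b c : ℕ → ℕ} (hab : AsympEquiv a b) (hbc : AsympEquiv b c) :
    AsympEquiv a c :=
  fun S => (hab S).trans (hbc S)

theorem boundedOn_comp_iff {a e : ℕ → ℕ} {S : Set ℕ} :
    BoundedOn (a ∘ e) S ↔ BoundedOn a (e '' S) := by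
  simp [BoundedOn]

theorem AsympEquiv.comp {a b : ℕ → ℕ} (h : AsympEquiv a b) (e : ℕ → ℕ) :
    AsympEquiv (a ∘ e) (b ∘ e) :=
  fun _ => boundedOn_comp_iff.trans ((h _).trans boundedOn_comp_iff.symm)

theorem asympEquiv_min_of_tendsto (f : ℕ → ℕ) {w : ℕ → ℕ} (hw : Tendsto w atTop atTop) :
    AsympEquiv (fun i => min (f i) (w i)) f := by
  intro S
  constructor
  · rintro ⟨B, hB⟩
    obtain ⟨N, hN⟩ := eventually_atTop.1 (hw.eventually_gt_atTop B)
    refine ⟨max B ((Finset.range N).sup f), fun i hi => ?_⟩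
    rcases lt_or_ge i N with hiN | hiN
    · exact (Finset.le_sup (Finset.mem_range.2 hiN)).trans (le_max_right _ _)
    · have : min (f i) (w i) ≤ B := hB i hi
      have := hN i hiN
      exact le_max_of_le_left (by omega)
  · rintro ⟨B, hB⟩
    exact ⟨B, fun i hi => (min_le_left _ _).trans (hB i hi)⟩

section TendsToInfinity

variable {v : ℕ → List ℕ}

theorem TendsToInfinity.comp_injective (hv : TendsToInfinity v) {φ : ℕ → ℕ}
    (hφ : φ.Injective) : TendsToInfinity fun i => v (φ i) :=
  fun n => Finite.preimage (f := φ) hφ.injOn (hv n)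

theorem TendsToInfinity.finite_setOf_exists_le (hv : TendsToInfinity v) (m : ℕ) :
    {i | ∃ x ∈ v i, x ≤ m}.Finite :=
  ((finite_Iic m).biUnion fun n _ => hv n).subset fun _ ⟨_, hx, hxm⟩ => mem_biUnion hxm hx

theorem TendsToInfinity.tendsto_of_mem (hv : TendsToInfinity v) {x : ℕ → ℕ}
    (hx : ∀ i, x i ∈ v i) : Tendsto x atTop atTop := by
  refine tendsto_atTop.2 fun m => ?_
  rw [← Nat.cofinite_eq_atTop, eventually_cofinite]
  exact (hv.finite_setOf_exists_le m).subset fun i hi => ⟨x i, hx i, (not_le.1 hi).le⟩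

end TendsToInfinity

theorem DimUnbounded.infinite_setOf_le_length {v : ℕ → List ℕ} (hv : DimUnbounded v) (k : ℕ) :
    {i | k ≤ (v i).length}.Infinite := by
  intro hfin
  obtain ⟨B, hB⟩ := (hfin.image fun i => (v i).length).bddAbove
  obtain ⟨i, hi⟩ := hv (max B k + 1)
  have : (v i).length ≤ B := hB (mem_image_of_mem _ (show k ≤ (v i).length by omega))
  omega

theorem exists_strictMono_long_large {v : ℕ → List ℕ} (hdim : DimUnbounded v)
    (hinf : TendsToInfinity v) :
    ∃ σ : ℕ → ℕ, StrictMono σ ∧ ∀ i, i + 2 ≤ (v (σ i)).length ∧ ∀ x ∈ v (σ i), i + 1 < x := by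
  refine extraction_forall_of_frequently
    (P := fun i j => i + 2 ≤ (v j).length ∧ ∀ x ∈ v j, i + 1 < x)
    fun i => Nat.frequently_atTop_iff_infinite.2 ?_
  refine ((hdim.infinite_setOf_le_length (i + 2)).sdiff
    (hinf.finite_setOf_exists_le (i + 1))).mono fun j hj => ⟨hj.1, fun x hx => ?_⟩
  by_contra! hle
  exact hj.2 ⟨x, hx, hle⟩

theorem List.forall₂_of_length_eq_of_forall_mem {α β : Type*} {R : α → β → Prop} {l₁ : List α}
    {l₂ : List β} (hlen : l₁.length = l₂.length) (h : ∀ x ∈ l₁, ∀ y ∈ l₂, R x y) :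
    Forall₂ R l₁ l₂ :=
  forall₂_iff_zip.2 ⟨hlen, fun hxy => h _ (of_mem_zip hxy).1 _ (of_mem_zip hxy).2⟩

def staircase (n k : ℕ) : List ℕ :=
  (List.range n).map fun r => min (r + 1) k

theorem length_staircase (n k : ℕ) : (staircase n k).length = n := by
  simp [staircase]

theorem mem_staircase {x k n : ℕ} (hx : 0 < x) (hxk : x ≤ k) (hkn : k ≤ n) :
    x ∈ staircase n k :=
  List.mem_map.2 ⟨x - 1, List.mem_range.2 (by omega), by omega⟩

theorem le_of_mem_staircase {y n k : ℕ} (hy : y ∈ staircase n k) : y ≤ k := by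
  obtain ⟨r, -, rfl⟩ := List.mem_map.1 hy
  exact min_le_right _ _

theorem pos_of_mem_staircase {y n k : ℕ} (hk : 0 < k) (hy : y ∈ staircase n k) : 0 < y := by
  obtain ⟨r, -, rfl⟩ := List.mem_map.1 hy
  exact lt_min (Nat.succ_pos r) hk

theorem asympMix_staircase {u : ℕ → List ℕ} (hpos : ∀ i, ∀ x ∈ u i, 0 < x) {n : ℕ → ℕ}
    (hn : ∀ i, i + 1 ≤ n i) : AsympMix u fun i => staircase (n i) (i + 1) :=
  fun a ha => ⟨fun i => min (a i) (i + 1),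
    fun i => mem_staircase (lt_min (hpos i _ (ha i)) i.succ_pos) (min_le_right _ _) (hn i),
    (asympEquiv_min_of_tendsto a (tendsto_add_atTop_nat 1)).symm⟩

theorem exists_strict_extraction_asympMix_of_dimUnbounded {v : ℕ → List ℕ}
    (hpos : ∀ i, ∀ x ∈ v i, 0 < x) (hinf : TendsToInfinity v) (hdim : DimUnbounded v) :
    ∃ σ : ℕ → ℕ, StrictMono σ ∧
      ∃ g : ℕ → List ℕ,
        (∀ i, (g i).Sublist (v (σ i)) ∧ g i ≠ [] ∧ (g i).length < (v (σ i)).length) ∧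
        ∀ h' : ℕ → List ℕ, Dominates (fun i => v (σ i)) h' →
          ∃ g' : ℕ → List ℕ, Dominates g g' ∧ AsympMix h' g' := by
  obtain ⟨σ, hσ, hσv⟩ := exists_strictMono_long_large hdim hinf
  refine ⟨σ, hσ, fun i => (v (σ i)).tail, fun i => ?_, fun h' hh' => ?_⟩
  · have := (hσv i).1
    refine ⟨List.tail_sublist _, List.ne_nil_of_length_pos ?_, ?_⟩ <;>
      simp only [List.length_tail] <;> omega
  · refine ⟨fun i => staircase ((v (σ i)).length - 1) (i + 1), fun i => ⟨?_, ?_, ?_⟩,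
      asympMix_staircase (fun i => (hh' i).2.1) fun i => by have := (hσv i).1; omega⟩
    · refine List.forall₂_of_length_eq_of_forall_mem (by simp [length_staircase]) ?_
      exact fun x hx y hy =>
        (le_of_mem_staircase hx).trans ((hσv i).2 y (List.mem_of_mem_tail hy)).le
    · exact fun x hx => pos_of_mem_staircase i.succ_pos hx
    · exact fun x hx => hpos _ x (List.mem_of_mem_tail hx)

open Encodable Denumerable in
/-- Reading `j` as a node of the tree of finite sequences of naturals, `prefixCode c j` is a
positive code of its prefix of length `c + 1`. -/
def prefixCode (c j : ℕ) : ℕ :=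
  encode ((ofNat (List ℕ) j).take (c + 1)) + 1

open Encodable in
theorem prefixCode_encode_of_prefix {ms l : List ℕ} (hl : ms <+: l) {c : ℕ}
    (hc : c < ms.length) : prefixCode c (encode l) = encode (ms.take (c + 1)) + 1 := by
  obtain ⟨r, rfl⟩ := hl
  simp [prefixCode, List.take_append_of_le_length (show c + 1 ≤ ms.length by omega)]

open Encodable in
theorem exists_strictMonoOn_of_asympEquiv_prefixCode {L : ℕ} {b : ℕ → ℕ → ℕ}
    (hb : ∀ c < L, AsympEquiv (prefixCode c) (b c)) :
    ∃ j, StrictMonoOn (fun c => b c j) (Iio L) := by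
  suffices ∀ t ≤ L, ∃ ms : List ℕ, ms.length = t ∧
      ∀ l, ms <+: l → StrictMonoOn (fun c => b c (encode l)) (Iio t) by
    obtain ⟨ms, -, hms⟩ := this L le_rfl
    exact ⟨_, hms ms (List.prefix_refl ms)⟩
  intro t
  induction t with
  | zero => exact fun _ => ⟨[], rfl, fun _ _ c hc => absurd hc (Nat.not_lt_zero c)⟩
  | succ t ih =>
    intro ht
    obtain ⟨ms, hlen, hmono⟩ := ih (by omega)
    have hsub : ∀ c < t, BoundedOn (b c) {j | ∃ l, ms <+: l ∧ encode l = j} := fun c hc =>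
      (hb c (by omega) _).1 ⟨_, by
        rintro _ ⟨l, hl, rfl⟩
        exact (prefixCode_encode_of_prefix hl (by omega)).le⟩
    choose! Bc hBc using hsub
    set B := (Finset.range t).sup Bc
    have hB : ∀ c < t, ∀ l, ms <+: l → b c (encode l) ≤ B := fun c hc l hl =>
      (hBc c hc _ ⟨l, hl, rfl⟩).trans (Finset.le_sup (Finset.mem_range.2 hc))
    obtain ⟨M, hM⟩ := (hb t (by omega) {j | ∃ l, ms <+: l ∧ encode l = j ∧ b t j ≤ B}).2
      ⟨B, by rintro _ ⟨l, -, rfl, hl⟩; exact hl⟩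
    have hchild : (fun m => encode (ms ++ [m])).Injective := fun m m' h => by
      simpa using encode_injective h
    obtain ⟨m, hm⟩ := (hchild.nat_tendsto_atTop.eventually_ge_atTop M).exists
    refine ⟨ms ++ [m], by simp [hlen], fun l hl => ?_⟩
    have hl' : ms <+: l := (List.prefix_append _ _).trans hl
    have hbig : B < b t (encode l) := by
      by_contra! hle
      have hcode := prefixCode_encode_of_prefix hl (c := t) (by simp [hlen])
      rw [List.take_of_length_le (by simp [hlen])] at hcode
      have := hM _ ⟨l, hl', rfl, hle⟩
      omega
    intro c hc c' hc' hcc'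
    rcases Nat.lt_succ_iff_lt_or_eq.1 hc' with hc't | rfl
    · exact hmono l hl' (mem_Iio.2 (hcc'.trans hc't)) hc't hcc'
    · exact (hB c hcc' l hl').trans_lt hbig

theorem List.getD_headD_mem {α : Type*} {l : List α} (hl : l ≠ []) (c : ℕ) (d : α) :
    l.getD c (l.headD d) ∈ l := by
  rcases lt_or_ge c l.length with hc | hc
  · rw [getD_eq_getElem _ _ hc]
    exact getElem_mem hc
  · rw [getD_eq_default _ _ hc]
    cases l with
    | nil => exact absurd rfl hl
    | cons a l => exact mem_cons_self

theorem List.getD_mapIdx_of_lt {α β : Type*} {f : ℕ → α → β} {l : List α} {c : ℕ}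
    (hc : c < l.length) (d : β) (d' : α) : (l.mapIdx f).getD c d = f c (l.getD c d') := by
  rw [getD_eq_getElem _ _ (by simpa using hc), getElem_mapIdx, getD_eq_getElem _ _ hc]

theorem List.forall₂_mapIdx_left {α β : Type*} {R : β → α → Prop} {f : ℕ → α → β}
    (hf : ∀ c x, R (f c x) x) (l : List α) : Forall₂ R (l.mapIdx f) l := by
  induction l generalizing f with
  | nil => simp
  | cons x l ih =>
    rw [mapIdx_cons]
    exact .cons (hf 0 x) (ih fun c => hf (c + 1))

theorem le_length_of_injOn {α : Type*} {l : List α} {f : ℕ → α} {L : ℕ}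
    (hf : ∀ c < L, f c ∈ l) (hinj : InjOn f (Iio L)) : L ≤ l.length := by
  classical
  calc L = (Finset.range L).card := (Finset.card_range L).symm
    _ ≤ l.toFinset.card := Finset.card_le_card_of_injOn f
        (fun c hc => List.mem_toFinset.2 (hf c (Finset.mem_range.1 hc))) (by simpa using hinj)
    _ ≤ l.length := l.toFinset_card_le

theorem exists_infinite_setOf_length_eq {u : ℕ → List ℕ} {k : ℕ} (hk : ∀ i, (u i).length < k) :
    ∃ L, {i | (u i).length = L}.Infinite := by
  obtain ⟨L, hL⟩ := Finite.exists_infinite_fiber fun i => (⟨(u i).length, hk i⟩ : Fin k)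
  refine ⟨L, (infinite_coe_iff.1 hL).mono fun i hi => ?_⟩
  simp only [mem_preimage, mem_singleton_iff] at hi
  simp [← hi]

/-- The `j`-th index satisfying `p` is read as tree node `j`. -/
def capByPrefixCode (u : ℕ → List ℕ) (p : ℕ → Prop) [DecidablePred p] (i : ℕ) : List ℕ :=
  (u i).mapIdx fun c x => min (prefixCode c (Nat.count p i)) x

section capByPrefixCode

variable {u : ℕ → List ℕ} {p : ℕ → Prop} [DecidablePred p]

theorem length_capByPrefixCode (i : ℕ) : (capByPrefixCode u p i).length = (u i).length :=
  List.length_mapIdx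

theorem dominates_capByPrefixCode (hpos : ∀ i, ∀ x ∈ u i, 0 < x) :
    Dominates u (capByPrefixCode u p) := by
  refine fun i =>
    ⟨List.forall₂_mapIdx_left (fun _ _ => min_le_right _ _) _, fun x hx => ?_, hpos i⟩
  obtain ⟨c, hc, rfl⟩ := List.mem_mapIdx.1 hx
  exact lt_min (Nat.succ_pos _) (hpos i _ (List.getElem_mem hc))

theorem getD_capByPrefixCode_nth (hp : (Set.ofPred p).Infinite) {c j : ℕ}
    (hc : c < (u (Nat.nth p j)).length) (d : ℕ) :
    (capByPrefixCode u p (Nat.nth p j)).getD c d =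
      min (prefixCode c j) ((u (Nat.nth p j)).getD c 0) := by
  rw [capByPrefixCode, List.getD_mapIdx_of_lt hc _ 0, Nat.count_nth_of_infinite hp]

end capByPrefixCode

theorem exists_dominated_not_asympMix {u g : ℕ → List ℕ} (hpos : ∀ i, ∀ x ∈ u i, 0 < x)
    (hinf : TendsToInfinity u) {k : ℕ} (hk : ∀ i, (u i).length < k)
    (hg : ∀ i, (g i).length < (u i).length) :
    ∃ h', Dominates u h' ∧ ∀ g', Dominates g g' → ¬ AsympMix h' g' := by
  obtain ⟨L, hL⟩ := exists_infinite_setOf_length_eq hk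
  set p : ℕ → Prop := fun i => (u i).length = L
  set h' := capByPrefixCode u p
  have he : ∀ j, (u (Nat.nth p j)).length = L := Nat.nth_mem_of_infinite hL
  refine ⟨h', dominates_capByPrefixCode hpos, fun g' hdom hmix => ?_⟩
  have hne : ∀ i, h' i ≠ [] := fun i =>
    List.ne_nil_of_length_pos ((length_capByPrefixCode (p := p) i).symm ▸
      (Nat.zero_le _).trans_lt (hg i))
  choose b hb hab using fun c => hmix (fun i => (h' i).getD c ((h' i).headD 0))
    fun i => List.getD_headD_mem (hne i) c 0
  have hequiv : ∀ c < L, AsympEquiv (prefixCode c) (b c ∘ Nat.nth p) := by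
    intro c hc
    have hcL : ∀ j, c < (u (Nat.nth p j)).length := fun j => (he j).symm ▸ hc
    have hcap : (fun i => (h' i).getD c ((h' i).headD 0)) ∘ Nat.nth p =
        fun j => min (prefixCode c j) ((u (Nat.nth p j)).getD c 0) :=
      funext fun j => getD_capByPrefixCode_nth hL (hcL j) _
    have hw := (hinf.comp_injective (Nat.nth_injective hL)).tendsto_of_mem
      (x := fun j => (u (Nat.nth p j)).getD c 0) fun j => by
      rw [List.getD_eq_getElem _ _ (hcL j)]
      exact List.getElem_mem _
    exact (asympEquiv_min_of_tendsto _ hw).symm.trans (hcap ▸ (hab c).comp (Nat.nth p))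
  obtain ⟨j, hj⟩ := exists_strictMonoOn_of_asympEquiv_prefixCode hequiv
  have hL_le := le_length_of_injOn (fun c _ => hb c (Nat.nth p j)) hj.injOn
  have hg'_len := (hdom (Nat.nth p j)).1.length_eq
  have hg_len := hg (Nat.nth p j)
  have hu_len := he j
  omega

theorem stmt2 (v : ℕ → List ℕ)
    (hpos : ∀ i, ∀ x ∈ v i, 0 < x)
    (hinf : TendsToInfinity v) :
    DimUnbounded v ↔
      ∃ σ : ℕ → ℕ, StrictMono σ ∧
        ∃ g : ℕ → List ℕ,
          (∀ i, (g i).Sublist (v (σ i)) ∧ g i ≠ [] ∧ (g i).length < (v (σ i)).length) ∧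
          ∀ h' : ℕ → List ℕ, Dominates (fun i => v (σ i)) h' →
            ∃ g' : ℕ → List ℕ, Dominates g g' ∧ AsympMix h' g' := by
  refine ⟨exists_strict_extraction_asympMix_of_dimUnbounded hpos hinf, ?_⟩
  rintro ⟨σ, hσ, g, hg, hmix⟩
  by_contra hdim
  obtain ⟨k, hk⟩ : ∃ k, ∀ i, (v i).length < k := by
    simpa [DimUnbounded] using hdim
  obtain ⟨h', hdom, hnot⟩ := exists_dominated_not_asympMix (fun i => hpos (σ i))
    (hinf.comp_injective hσ.injective) (fun i => hk (σ i)) (fun i => (hg i).2.2)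
  obtain ⟨g', hg', hmix'⟩ := hmix h' hdom
  exact hnot g' hg' hmix'
end

section
/- Let h be a vector sequence such that every coordinate of every h i is positive, (h i).length ≥ 2 for all i, h tends to infinity, and for every m ∈ ℕ only finitely many i satisfy (h i).length ≤ m. Define the vector sequence g' by: g' i is the list of length (h i).length − 1 whose j-th coordinate, for 1 ≤ j ≤ (h i).length − 1, equals min(a_j, j), where a_j denotes the j-th coordinate of h i. Then every vector sequence h' dominated by h is an asymptotic mix of g'. -/
/-!
Given an extraction `a` of `h'`, read off from `truncMin (h i)` the coordinate with index
`j = min (a i) (length - 1)`, i.e. `b i = min (h i)_j j`. Always `b i ≤ a i`. Conversely, since `h`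
tends to infinity and the lengths of `h i` tend to infinity, for every `B` all but finitely many
`h i` have every coordinate and their length above `B + 1`; for those `i`, `b i ≤ B` forces
`a i ≤ B`. So `a` and `b` are bounded on the same sets.
-/

open Filter

/-- The vector `(min (l_j) j)_{1 ≤ j < length l}`, with `l` indexed from `1`. -/
def truncMin (l : List ℕ) : List ℕ :=
  List.ofFn fun j : Fin (l.length - 1) =>
    min (l.get ⟨j.1, Nat.lt_of_lt_of_le j.2 (Nat.sub_le _ _)⟩) (j.1 + 1)

lemma min_getD_mem_truncMin {l : List ℕ} {j : ℕ} (hj : j + 1 < l.length) :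
    min (l.getD j 0) (j + 1) ∈ truncMin l :=
  List.mem_ofFn.2 ⟨⟨j, by omega⟩, by rw [List.getD_eq_getElem _ _ (by omega)]; rfl⟩

/-- The coordinate of `truncMin l` matched with `k`: the one of index `min k (length l - 1)`. -/
def truncMinPick (l : List ℕ) (k : ℕ) : ℕ :=
  min (l.getD (min (k - 1) (l.length - 2)) 0) (min (k - 1) (l.length - 2) + 1)

lemma truncMinPick_mem {l : List ℕ} (hl : 2 ≤ l.length) (k : ℕ) :
    truncMinPick l k ∈ truncMin l :=
  min_getD_mem_truncMin (by omega)

lemma truncMinPick_le (l : List ℕ) {k : ℕ} (hk : 0 < k) : truncMinPick l k ≤ k :=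
  (min_le_right _ _).trans (by omega)

lemma min_le_truncMinPick {l : List ℕ} {B : ℕ} (hB : ∀ x ∈ l, B < x) (hl : B + 2 ≤ l.length)
    (k : ℕ) : min k (B + 1) ≤ truncMinPick l k := by
  have hget : B < l.getD (min (k - 1) (l.length - 2)) 0 := by
    rw [List.getD_eq_getElem _ _ (by omega)]
    exact hB _ (List.getElem_mem _)
  exact le_min (by omega) (by omega)

lemma TendsToInfinity.eventually_forall_lt {v : ℕ → List ℕ} (hv : TendsToInfinity v) (B : ℕ) :
    ∀ᶠ i in cofinite, ∀ x ∈ v i, B < x := by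
  have hnot : ∀ᶠ i in cofinite, ∀ n ∈ Set.Iic B, n ∉ v i :=
    (Set.finite_Iic B).eventually_all.2 fun n _ => (hv n).eventually_cofinite_notMem
  filter_upwards [hnot] with i hi x hx
  by_contra! hxB
  exact hi x hxB hx

lemma boundedOn_of_eventually_le {a : ℕ → ℕ} {S : Set ℕ} {B : ℕ}
    (ha : ∀ᶠ i in cofinite, i ∈ S → a i ≤ B) : BoundedOn a S := by
  obtain ⟨C, hC⟩ := (eventually_cofinite.1 ha).image a |>.bddAbove
  refine ⟨max B C, fun i hi => ?_⟩
  by_cases hle : a i ≤ B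
  · exact le_max_of_le_left hle
  · exact le_max_of_le_right (hC ⟨i, fun h => hle (h hi), rfl⟩)

lemma asympEquiv_of_le_of_eventually_min_le {a b : ℕ → ℕ} (hba : ∀ i, b i ≤ a i)
    (hab : ∀ B, ∀ᶠ i in cofinite, min (a i) (B + 1) ≤ b i) : AsympEquiv a b := by
  refine fun S => ⟨fun ⟨B, hB⟩ => ⟨B, fun i hi => (hba i).trans (hB i hi)⟩, fun ⟨B, hB⟩ => ?_⟩
  refine boundedOn_of_eventually_le (B := B) ?_
  filter_upwards [hab B] with i hi hiS
  have := hB i hiS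
  omega

theorem stmt3_general (h : ℕ → List ℕ)
    (hlen : ∀ i, 2 ≤ (h i).length)
    (hinf : TendsToInfinity h)
    (hdim : ∀ m : ℕ, {i | (h i).length ≤ m}.Finite) :
    ∀ h' : ℕ → List ℕ, Dominates h h' →
      AsympMix h'
        (fun i => List.ofFn (fun j : Fin ((h i).length - 1) =>
          min ((h i).get ⟨j.1, Nat.lt_of_lt_of_le j.2 (Nat.sub_le _ _)⟩) (j.1 + 1))) := by
  intro h' hdom a ha
  refine ⟨fun i => truncMinPick (h i) (a i), fun i => truncMinPick_mem (hlen i) (a i), ?_⟩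
  refine asympEquiv_of_le_of_eventually_min_le
    (fun i => truncMinPick_le (h i) ((hdom i).2.1 _ (ha i))) fun B => ?_
  have hlong : ∀ᶠ i in cofinite, B + 2 ≤ (h i).length :=
    eventually_cofinite.2 (by simpa only [not_le, Nat.lt_succ_iff] using hdim (B + 1))
  filter_upwards [hinf.eventually_forall_lt B, hlong] with i hB hl
  exact min_le_truncMinPick hB hl (a i)

theorem stmt3 (h : ℕ → List ℕ)
    (hpos : ∀ i, ∀ x ∈ h i, 0 < x)
    (hlen : ∀ i, 2 ≤ (h i).length)
    (hinf : TendsToInfinity h)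
    (hdim : ∀ m : ℕ, {i | (h i).length ≤ m}.Finite) :
    ∀ h' : ℕ → List ℕ, Dominates h h' →
      AsympMix h'
        (fun i => List.ofFn (fun j : Fin ((h i).length - 1) =>
          min ((h i).get ⟨j.1, Nat.lt_of_lt_of_le j.2 (Nat.sub_le _ _)⟩) (j.1 + 1))) :=
  stmt3_general h hlen hinf hdim
end

section
/- Let v be a vector sequence. If for every N ∈ ℕ there exists an index i such that at least N coordinates of v i (counted with multiplicity) are greater than N, then there exists a sub-extraction w of v such that w tends to infinity and dim w is unbounded. -/
/-!
If all coordinates of `v 0, …, v (m - 1)` lie below `T > 0`, an index with at least `T`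
coordinates above `T` is at least `m`; since raising the threshold only strengthens the condition,
for each `N` infinitely many `v i` have at least `N` coordinates above `N`. A diagonal extraction `σ`
with `k + 1` coordinates of `v (σ k)` above `k + 1` then gives `w k`, the coordinates of `v (σ k)`
above `k + 1`: nonempty, of length greater than `k`, and with all entries greater than `k`.
-/

open Filter

lemma exists_forall_mem_lt (v : ℕ → List ℕ) (m : ℕ) : ∃ B, ∀ i < m, ∀ x ∈ v i, x < B := by
  obtain ⟨B, hB⟩ :=
    Finset.exists_nat_subset_range ((Finset.range m).biUnion fun i => (v i).toFinset)
  refine ⟨B, fun i hi x hx => Finset.mem_range.mp (hB ?_)⟩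
  exact Finset.mem_biUnion.mpr ⟨i, Finset.mem_range.mpr hi, List.mem_toFinset.mpr hx⟩

lemma frequently_le_countP_lt (v : ℕ → List ℕ)
    (hyp : ∀ N : ℕ, ∃ i, N ≤ (v i).countP (fun x => decide (N < x))) (N : ℕ) :
    ∃ᶠ i in atTop, N ≤ (v i).countP (fun x => decide (N < x)) := by
  refine frequently_atTop.mpr fun m => ?_
  obtain ⟨B, hB⟩ := exists_forall_mem_lt v m
  set T := N + B + 1
  obtain ⟨i, hi⟩ := hyp T
  obtain ⟨x, hx, hTx⟩ := List.countP_pos_iff.mp (hi.trans_lt' (by omega))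
  have hmi : m ≤ i := by
    by_contra! him
    have := hB i him x hx
    simp only [decide_eq_true_eq] at hTx
    omega
  have hmono : (v i).countP (fun x => decide (T < x)) ≤ (v i).countP (fun x => decide (N < x)) :=
    List.countP_mono_left fun y _ hy => by simp only [decide_eq_true_eq] at hy ⊢; omega
  exact ⟨i, hmi, by omega⟩

theorem stmt4 (v : ℕ → List ℕ)
    (hyp : ∀ N : ℕ, ∃ i, N ≤ (v i).countP (fun x => decide (N < x))) :
    ∃ w : ℕ → List ℕ, SubExtraction v w ∧ TendsToInfinity w ∧ DimUnbounded w := by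
  obtain ⟨σ, hσ, hσN⟩ :=
    extraction_forall_of_frequently fun k => frequently_le_countP_lt v hyp (k + 1)
  have hlen (k : ℕ) : k + 1 ≤ ((v (σ k)).filter fun x => decide (k + 1 < x)).length :=
    List.countP_eq_length_filter ▸ hσN k
  refine ⟨fun k => (v (σ k)).filter fun x => decide (k + 1 < x), ⟨σ, hσ, fun k => ?_⟩, ?_, ?_⟩
  · refine ⟨List.filter_sublist, fun hnil => ?_⟩
    simpa [hnil] using hlen k
  · refine fun n => (Set.finite_Iio n).subset fun k hk => ?_
    simp only [Set.mem_ofPred_eq, List.mem_filter, decide_eq_true_eq] at hk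
    exact Set.mem_Iio.mpr (by omega)
  · exact fun k => ⟨k, (hlen k).trans' k.le_succ⟩
end

section
/- Let α be a type, l a finite list over α, p a predicate on α, and m, n ∈ ℕ. Suppose that at most m elements of l (counted with multiplicity) fail to satisfy p, and that every contiguous (infix) sublist of l all of whose elements satisfy p has length at most n. Then the length of l is at most n·(m+1) + m. -/
/-!
Induction on `l` with the invariant `l.length ≤ (n + 1) * #(entries failing p) + (leading p-run)`:
prepending an entry satisfying `p` lengthens the leading run, while prepending one failing `p`
closes the old leading run, whose length is at most `n`. Bounding the final leading run by `n`
as well gives `l.length ≤ (n + 1) * m + n`.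
-/

namespace List

variable {α : Type*} {p : α → Prop} [DecidablePred p] {n : ℕ}

theorem length_takeWhile_le_of_forall_infix {l : List α}
    (hinfix : ∀ u : List α, u <:+: l → (∀ x ∈ u, p x) → u.length ≤ n) :
    (l.takeWhile (p ·)).length ≤ n :=
  hinfix _ (takeWhile_prefix _).isInfix fun _ hx => by simpa using mem_takeWhile_imp hx

theorem length_le_mul_countP_not_add_length_takeWhile {l : List α}
    (hinfix : ∀ u : List α, u <:+: l → (∀ x ∈ u, p x) → u.length ≤ n) :
    l.length ≤ (n + 1) * l.countP (fun x => decide (¬ p x)) + (l.takeWhile (p ·)).length := by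
  induction l with
  | nil => simp
  | cons x t ih =>
    have hinfix_t : ∀ u : List α, u <:+: t → (∀ y ∈ u, p y) → u.length ≤ n :=
      fun u hu => hinfix u (hu.trans (suffix_cons x t).isInfix)
    have ht := ih hinfix_t
    by_cases hx : p x
    · simp only [takeWhile_cons_of_pos (p := (p ·)) (decide_eq_true hx), countP_cons_of_neg
        (p := fun x => decide (¬ p x)) (by simpa using hx), length_cons]
      omega
    · have hrun := length_takeWhile_le_of_forall_infix hinfix_t
      simp only [takeWhile_cons_of_neg (p := (p ·)) (by simpa using hx), countP_cons_of_pos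
        (p := fun x => decide (¬ p x)) (by simpa using hx), length_cons, length_nil]
      nlinarith

end List

theorem stmt5 {α : Type*} (l : List α) (p : α → Prop) [DecidablePred p] (m n : ℕ)
    (hcount : l.countP (fun x => decide (¬ p x)) ≤ m)
    (hinfix : ∀ u : List α, u <:+: l → (∀ x ∈ u, p x) → u.length ≤ n) :
    l.length ≤ n * (m + 1) + m := by
  have hscan := List.length_le_mul_countP_not_add_length_takeWhile hinfix
  have hrun := List.length_takeWhile_le_of_forall_infix hinfix
  calc l.length ≤ (n + 1) * m + n := by nlinarith
    _ = n * (m + 1) + m := by ring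
end

section
/- Let I ⊆ ℕ and define I' = {x ∈ I : it is not the case that x is even and (x+1 ∈ I or (x ≥ 1 and x−1 ∈ I))}. Then: (a) no two consecutive integers both belong to I', i.e., for every x, not both x ∈ I' and x+1 ∈ I'; and (b) for every infinite set R ⊆ ℕ with R ∩ I = ∅, the gap-count sequence of (R, I) is unbounded if and only if the gap-count sequence of (R, I') is unbounded. -/
/-!
Deleting from `I` every even element with a neighbour in `I` leaves a set `I'` without two
consecutive elements: of two neighbours one is odd and survives, so the even one is deleted.
Every deleted `x` has an odd, hence surviving, neighbour `x ± 1`, and if `x` lies strictly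
between two points outside `I` then so does that neighbour. Hence each gap of `R` contains at
most three times as many points of `I` as of `I'`, and the gap counts are unbounded for both
sets or for neither.
-/

def pruneEven (I : Set ℕ) : Set ℕ :=
  {x ∈ I | ¬(Even x ∧ (x + 1 ∈ I ∨ (1 ≤ x ∧ x - 1 ∈ I)))}

lemma pruneEven_subset (I : Set ℕ) : pruneEven I ⊆ I := fun _ hx => hx.1

lemma pruneEven_no_two_consecutive (I : Set ℕ) (x : ℕ) :
    ¬(x ∈ pruneEven I ∧ x + 1 ∈ pruneEven I) := by
  rintro ⟨⟨hxI, hx⟩, hx1I, hx1⟩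
  rcases Nat.even_or_odd x with he | ho
  · exact hx ⟨he, Or.inl hx1I⟩
  · exact hx1 ⟨ho.add_one, Or.inr ⟨le_add_self, by simpa using hxI⟩⟩

lemma mem_pruneEven_of_odd {I : Set ℕ} {x : ℕ} (hxI : x ∈ I) (hx : Odd x) :
    x ∈ pruneEven I :=
  ⟨hxI, fun h => Nat.not_even_iff_odd.mpr hx h.1⟩

lemma succ_mem_pruneEven_or_pred_mem_pruneEven {I : Set ℕ} {x : ℕ} (hxI : x ∈ I)
    (hx : x ∉ pruneEven I) :
    x + 1 ∈ pruneEven I ∨ (1 ≤ x ∧ x - 1 ∈ pruneEven I) := by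
  obtain ⟨heven, hsucc | ⟨hpos, hpred⟩⟩ :
      Even x ∧ (x + 1 ∈ I ∨ (1 ≤ x ∧ x - 1 ∈ I)) := not_not.mp fun h => hx ⟨hxI, h⟩
  · exact Or.inl (mem_pruneEven_of_odd hsucc heven.add_one)
  · exact Or.inr ⟨hpos, mem_pruneEven_of_odd hpred (Nat.Even.sub_odd hpos heven odd_one)⟩

lemma ncard_le_three_mul_of_subset_union_image {α : Type*} {S T : Set α} (hT : T.Finite)
    (f g : α → α) (h : S ⊆ T ∪ f '' T ∪ g '' T) : S.ncard ≤ 3 * T.ncard :=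
  calc S.ncard ≤ (T ∪ f '' T ∪ g '' T).ncard :=
        Set.ncard_le_ncard h ((hT.union (hT.image f)).union (hT.image g))
    _ ≤ T.ncard + (f '' T).ncard + (g '' T).ncard :=
        (Set.ncard_union_le _ _).trans (Nat.add_le_add_right (Set.ncard_union_le _ _) _)
    _ ≤ T.ncard + T.ncard + T.ncard :=
        Nat.add_le_add (Nat.add_le_add_left (Set.ncard_image_le hT) _) (Set.ncard_image_le hT)
    _ = 3 * T.ncard := by ring

lemma finite_setOf_mem_lt_lt (I : Set ℕ) (r r' : ℕ) : {x ∈ I | r < x ∧ x < r'}.Finite :=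
  (Set.finite_Iio r').subset fun _ hx => hx.2.2

lemma ncard_window_le_three_mul_pruneEven {I : Set ℕ} {r r' : ℕ} (hr : r ∉ I)
    (hr' : r' ∉ I) :
    {x ∈ I | r < x ∧ x < r'}.ncard ≤ 3 * {x ∈ pruneEven I | r < x ∧ x < r'}.ncard := by
  refine ncard_le_three_mul_of_subset_union_image (finite_setOf_mem_lt_lt _ r r')
    (· - 1) (· + 1) ?_
  rintro x ⟨hxI, hrx, hxr'⟩
  by_cases hx : x ∈ pruneEven I
  · exact Or.inl (Or.inl ⟨hx, hrx, hxr'⟩)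
  rcases succ_mem_pruneEven_or_pred_mem_pruneEven hxI hx with hsucc | ⟨hpos, hpred⟩
  · have : x + 1 ≠ r' := fun h => hr' (h ▸ hsucc.1)
    exact Or.inl (Or.inr ⟨x + 1, ⟨hsucc, by omega, by omega⟩, by simp⟩)
  · have : x - 1 ≠ r := fun h => hr (h ▸ hpred.1)
    exact Or.inr ⟨x - 1, ⟨hpred, by omega, by omega⟩, Nat.sub_add_cancel hpos⟩

lemma GapUnbounded.of_ncard_le_mul {R I J : Set ℕ} {c : ℕ} (hc : 0 < c)
    (h : ∀ r r', ConsecutiveIn R r r' →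
      {x ∈ I | r < x ∧ x < r'}.ncard ≤ c * {x ∈ J | r < x ∧ x < r'}.ncard)
    (hI : GapUnbounded R I) : GapUnbounded R J := by
  intro k
  obtain ⟨r, r', hrr', hk⟩ := hI (c * k)
  exact ⟨r, r', hrr', le_of_mul_le_mul_left (hk.trans (h r r' hrr')) hc⟩

lemma GapUnbounded.mono {R I J : Set ℕ} (hIJ : I ⊆ J) (hI : GapUnbounded R I) :
    GapUnbounded R J :=
  hI.of_ncard_le_mul one_pos fun r r' _ => by
    rw [one_mul]
    exact Set.ncard_le_ncard (fun x hx => ⟨hIJ hx.1, hx.2⟩) (finite_setOf_mem_lt_lt J r r')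

theorem stmt6 (I : Set ℕ) :
    let I' : Set ℕ := {x ∈ I | ¬(Even x ∧ (x + 1 ∈ I ∨ (1 ≤ x ∧ x - 1 ∈ I)))}
    (∀ x : ℕ, ¬(x ∈ I' ∧ x + 1 ∈ I')) ∧
      (∀ R : Set ℕ, R.Infinite → R ∩ I = ∅ →
        (GapUnbounded R I ↔ GapUnbounded R I')) := by
  refine ⟨pruneEven_no_two_consecutive I, fun R _ hRI =>
    ⟨?_, GapUnbounded.mono (pruneEven_subset I)⟩⟩
  have hR : ∀ r ∈ R, r ∉ I := fun r hr hrI =>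
    Set.eq_empty_iff_forall_notMem.mp hRI r ⟨hr, hrI⟩
  exact GapUnbounded.of_ncard_le_mul three_pos fun r r' hrr' =>
    ncard_window_le_three_mul_pruneEven (hR r hrr'.1) (hR r' hrr'.2.1)
end

section
/- Let a : ℕ → ℕ and let s : ℕ → ℕ be strictly increasing with s(i+1) > s(i) + a(i) for all i. Then the following are equivalent: (i) for every m ∈ ℕ, only finitely many i satisfy a(i) ≤ m; (ii) for every infinite set Y ⊆ ℕ for which there exists k ≥ 1 such that every y ∈ Y has some y' ∈ Y with y < y' ≤ y + k, for all but finitely many i the interval {n : s(i) ≤ n < s(i) + a(i)} contains at least two elements of Y. -/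
/-!
If `a i → ∞`, then for `Y` with gaps bounded by `k`, every window `[s i, s i + a i)` with
`a i > 2k` lying beyond the first element of `Y` contains two consecutive elements of `Y`; since
`s i ≥ i`, this covers all but finitely many `i`. Conversely, if `a i ≤ m` infinitely often, the
multiples of `m + 1` have gaps bounded by `m + 1` but meet each of those windows at most once.
-/

def HasGapsBoundedBy (Y : Set ℕ) (k : ℕ) : Prop :=
  ∀ y ∈ Y, ∃ y' ∈ Y, y < y' ∧ y' ≤ y + k

namespace HasGapsBoundedBy

variable {Y : Set ℕ} {k y₀ n : ℕ}

theorem exists_mem_Ioc (hY : HasGapsBoundedBy Y k) (hy₀ : y₀ ∈ Y) (hn : y₀ ≤ n) :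
    ∃ y ∈ Y, y ∈ Set.Ioc n (n + k) := by
  induction n, hn using Nat.le_induction with
  | base => exact hY y₀ hy₀
  | succ n _ ih =>
    obtain ⟨y, hy, hny, hyn⟩ := ih
    by_cases hy_succ : y = n + 1
    · exact hy_succ ▸ hY y hy
    · exact ⟨y, hy, by omega, by omega⟩

theorem two_le_ncard_inter_Ico (hY : HasGapsBoundedBy Y k) (hy₀ : y₀ ∈ Y) (hn : y₀ ≤ n)
    {l : ℕ} (hl : 2 * k < l) : 2 ≤ (Y ∩ Set.Ico n (n + l)).ncard := by
  obtain ⟨y₁, hy₁, hny₁, hy₁n⟩ := hY.exists_mem_Ioc hy₀ hn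
  obtain ⟨y₂, hy₂, hy₁y₂, hy₂y₁⟩ := hY.exists_mem_Ioc hy₀ (hn.trans hny₁.le)
  have hfin : (Y ∩ Set.Ico n (n + l)).Finite := (Set.finite_Ico _ _).inter_of_right Y
  exact (Set.one_lt_ncard hfin).2
    ⟨y₁, ⟨hy₁, by omega, by omega⟩, y₂, ⟨hy₂, by omega, by omega⟩, by omega⟩

end HasGapsBoundedBy

theorem hasGapsBoundedBy_range_mul {d : ℕ} (hd : 0 < d) :
    HasGapsBoundedBy (Set.range (d * ·)) d := by
  rintro _ ⟨j, rfl⟩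
  refine ⟨d * (j + 1), ⟨j + 1, rfl⟩, ?_⟩
  dsimp only
  rw [mul_add_one]
  omega

theorem ncard_range_mul_inter_Ico_le_one {d l : ℕ} (hl : l ≤ d) (n : ℕ) :
    (Set.range (d * ·) ∩ Set.Ico n (n + l)).ncard ≤ 1 := by
  rw [Set.ncard_le_one ((Set.finite_Ico _ _).inter_of_right _)]
  rintro _ ⟨⟨p, rfl⟩, hp₁, hp₂⟩ _ ⟨⟨q, rfl⟩, hq₁, hq₂⟩
  dsimp only at hp₁ hp₂ hq₁ hq₂ ⊢
  have hpq : p < q + 1 := Nat.lt_of_mul_lt_mul_left (a := d) (by rw [mul_add_one]; omega)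
  have hqp : q < p + 1 := Nat.lt_of_mul_lt_mul_left (a := d) (by rw [mul_add_one]; omega)
  rw [show p = q by omega]

theorem stmt9_general (a s : ℕ → ℕ) (hs : StrictMono s) :
    (∀ m : ℕ, {i | a i ≤ m}.Finite) ↔
      (∀ Y : Set ℕ, Y.Infinite →
        (∃ k : ℕ, 1 ≤ k ∧ ∀ y ∈ Y, ∃ y' ∈ Y, y < y' ∧ y' ≤ y + k) →
        {i | ¬ 2 ≤ (Y ∩ {n | s i ≤ n ∧ n < s i + a i}).ncard}.Finite) := by
  constructor
  · rintro ha Y hY ⟨k, -, hYk⟩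
    obtain ⟨y₀, hy₀⟩ := hY.nonempty
    have hearly : {i | s i < y₀}.Finite :=
      (Set.finite_Iio y₀).subset fun i hi => hs.le_apply.trans_lt hi
    refine ((ha (2 * k)).union hearly).subset fun i hi => ?_
    by_contra hlate
    simp only [Set.mem_union, Set.mem_ofPred_eq, not_or, not_le, not_lt] at hlate
    exact hi (HasGapsBoundedBy.two_le_ncard_inter_Ico hYk hy₀ hlate.2 hlate.1)
  · intro h m
    have hY : (Set.range ((m + 1) * ·)).Infinite :=
      Set.infinite_range_of_injective (mul_right_injective₀ m.succ_ne_zero)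
    refine (h _ hY ⟨m + 1, le_add_self, hasGapsBoundedBy_range_mul m.succ_pos⟩).subset
      fun i hi => ?_
    change ¬ 2 ≤ (_ ∩ Set.Ico (s i) (s i + a i)).ncard
    have := ncard_range_mul_inter_Ico_le_one (Nat.le_add_right_of_le hi : a i ≤ m + 1) (s i)
    omega

theorem stmt9 (a s : ℕ → ℕ) (hs : StrictMono s)
    (hgap : ∀ i : ℕ, s i + a i < s (i + 1)) :
    (∀ m : ℕ, {i | a i ≤ m}.Finite) ↔
      (∀ Y : Set ℕ, Y.Infinite →
        (∃ k : ℕ, 1 ≤ k ∧ ∀ y ∈ Y, ∃ y' ∈ Y, y < y' ∧ y' ≤ y + k) →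
        {i | ¬ 2 ≤ (Y ∩ {n | s i ≤ n ∧ n < s i + a i}).ncard}.Finite) :=
  stmt9_general a s hs
end

section
/- Let R, I ⊆ ℕ with R ∩ I = ∅. Define J = I ∪ {z : there exist x, y ∈ I with x < z < y, z ≠ y − 1, and no element of I and no element of R lies strictly between x and y}. Then: (a) I ⊆ J and J ∩ R = ∅; (b) 0 ∈ J iff 0 ∈ I, and for every x ∈ ℕ, (x+1 ∈ J and x ∉ J) if and only if (x+1 ∈ I and x ∉ I); (c) for all x, y ∈ J with x < y, if no element of J and no element of R lies strictly between x and y, then y ≤ x + 2. -/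
/-!
Every point added to `I` lies in an `R`-free gap `(a, b)` between consecutive elements of `I`,
and all of `a + 1, …, b - 2` are added while `b - 1` is not. So each such gap turns into a run
of `J` continuing the run of `I` that ends at `a`, followed by the single hole `b - 1` before `b`:
no run of `J` starts at a new point, and inside `R`-free stretches `J` has no hole longer than one.
-/

namespace GapFill

def NoneBetween (S : Set ℕ) (x y : ℕ) : Prop := ∀ w ∈ S, ¬(x < w ∧ w < y)

theorem NoneBetween.mono {S T : Set ℕ} {x y : ℕ} (h : NoneBetween T x y) (hST : S ⊆ T) :
    NoneBetween S x y :=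
  fun w hw => h w (hST hw)

def gapFill (R I : Set ℕ) : Set ℕ :=
  I ∪ {z | ∃ x ∈ I, ∃ y ∈ I, x < z ∧ z < y ∧ z ≠ y - 1 ∧ NoneBetween I x y ∧ NoneBetween R x y}

variable {R I : Set ℕ}

theorem subset_gapFill : I ⊆ gapFill R I := fun _ => Or.inl

theorem mem_gapFill_of_between {a b z : ℕ} (ha : a ∈ I) (hb : b ∈ I) (haz : a < z)
    (hzb : z + 1 < b) (hI : NoneBetween I a b) (hR : NoneBetween R a b) : z ∈ gapFill R I :=
  Or.inr ⟨a, ha, b, hb, haz, by omega, by omega, hI, hR⟩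

theorem gapFill_inter_eq_empty (hdisj : R ∩ I = ∅) : gapFill R I ∩ R = ∅ := by
  refine Set.eq_empty_of_forall_notMem ?_
  rintro z ⟨hzI | ⟨x, -, y, -, hxz, hzy, -, -, hR⟩, hzR⟩
  · exact hdisj.subset ⟨hzR, hzI⟩
  · exact hR z hzR ⟨hxz, hzy⟩

theorem zero_mem_gapFill_iff : 0 ∈ gapFill R I ↔ 0 ∈ I := by
  refine ⟨?_, fun h => subset_gapFill h⟩
  rintro (h | ⟨x, -, y, -, hx0, -⟩)
  · exact h
  · exact absurd hx0 (Nat.not_lt_zero x)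

theorem succ_mem_gapFill_and_notMem_iff (x : ℕ) :
    (x + 1 ∈ gapFill R I ∧ x ∉ gapFill R I) ↔ (x + 1 ∈ I ∧ x ∉ I) := by
  constructor
  · rintro ⟨hx1 | ⟨a, ha, b, hb, hax, hxb, hne, hI, hR⟩, hx⟩
    · exact ⟨hx1, fun h => hx (subset_gapFill h)⟩
    · have hax' : a < x := by
        rcases Nat.lt_succ_iff_lt_or_eq.mp hax with h | rfl
        · exact h
        · exact absurd (subset_gapFill ha) hx
      exact absurd (mem_gapFill_of_between ha hb hax' (by omega) hI hR) hx
  · rintro ⟨hx1, hx⟩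
    refine ⟨subset_gapFill hx1, ?_⟩
    rintro (h | ⟨a, -, b, -, hax, hxb, hne, hI, -⟩)
    · exact hx h
    · exact hI (x + 1) hx1 ⟨by omega, by omega⟩

theorem succ_mem_gapFill_of_gap {x y : ℕ} (hx : x ∈ gapFill R I) (hy : y ∈ gapFill R I)
    (hxy : x + 3 ≤ y) (hJ : NoneBetween (gapFill R I) x y) (hR : NoneBetween R x y) :
    x + 1 ∈ gapFill R I := by
  have hI : NoneBetween I x y := hJ.mono subset_gapFill
  rcases hx with hxI | ⟨a, ha, b, hb, hax, hxb, -, hIab, hRab⟩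
  · rcases hy with hyI | ⟨c, hc, d, hd, hcy, hyd, hyne, hIcd, hRcd⟩
    · exact mem_gapFill_of_between hxI hyI (by omega) (by omega) hI hR
    · obtain rfl : c = x := by
        rcases lt_trichotomy c x with h | h | h
        · exact absurd ⟨h, by omega⟩ (hIcd x hxI)
        · exact h
        · exact absurd ⟨h, hcy⟩ (hI c hc)
      exact mem_gapFill_of_between hc hd (by omega) (by omega) hIcd hRcd
  · have hyb : y ≤ b := not_lt.mp fun h => hI b hb ⟨hxb, h⟩
    exact mem_gapFill_of_between ha hb (by omega) (by omega) hIab hRab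

theorem le_add_two_of_gap {x y : ℕ} (hx : x ∈ gapFill R I) (hy : y ∈ gapFill R I)
    (hJ : NoneBetween (gapFill R I) x y) (hR : NoneBetween R x y) : y ≤ x + 2 := by
  by_contra! h
  exact hJ (x + 1) (succ_mem_gapFill_of_gap hx hy h hJ hR) ⟨by omega, by omega⟩

end GapFill

open GapFill in
theorem stmt10 (R I : Set ℕ) (hdisj : R ∩ I = ∅) :
    let J : Set ℕ := I ∪ {z | ∃ x ∈ I, ∃ y ∈ I, x < z ∧ z < y ∧ z ≠ y - 1 ∧
      (∀ w ∈ I, ¬(x < w ∧ w < y)) ∧ (∀ w ∈ R, ¬(x < w ∧ w < y))}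
    (I ⊆ J ∧ J ∩ R = ∅) ∧
      ((0 ∈ J ↔ 0 ∈ I) ∧
        ∀ x : ℕ, (x + 1 ∈ J ∧ x ∉ J) ↔ (x + 1 ∈ I ∧ x ∉ I)) ∧
      (∀ x ∈ J, ∀ y ∈ J, x < y →
        (∀ w ∈ J, ¬(x < w ∧ w < y)) → (∀ w ∈ R, ¬(x < w ∧ w < y)) → y ≤ x + 2) := by
  show (I ⊆ gapFill R I ∧ gapFill R I ∩ R = ∅) ∧
      ((0 ∈ gapFill R I ↔ 0 ∈ I) ∧
        ∀ x : ℕ, (x + 1 ∈ gapFill R I ∧ x ∉ gapFill R I) ↔ (x + 1 ∈ I ∧ x ∉ I)) ∧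
      (∀ x ∈ gapFill R I, ∀ y ∈ gapFill R I, x < y →
        NoneBetween (gapFill R I) x y → NoneBetween R x y → y ≤ x + 2)
  exact ⟨⟨subset_gapFill, gapFill_inter_eq_empty hdisj⟩,
    ⟨zero_mem_gapFill_iff, succ_mem_gapFill_and_notMem_iff⟩,
    fun _ hx _ hy _ hJ hR => le_add_two_of_gap hx hy hJ hR⟩
end

section
/- Let R, I ⊆ ℕ with R infinite and R ∩ I = ∅, and suppose that for all consecutive u < w in I, either some element of R lies strictly between u and w, or w ≤ u + 2. Let X = R ∪ {x ∈ ℕ : for every y ∈ I, x and y differ by at least 2}. Then the gap-count sequence of (R, I) is unbounded if and only if U₁(X) holds. -/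
/-- The predicate `U₁(X)`: for every `k` there are consecutive positions of `X`
at distance at least `k`. -/
def U₁ (X : Set ℕ) : Prop :=
  ∀ k : ℕ, ∃ x x', ConsecutiveIn X x x' ∧ k ≤ x' - x

def farFrom (I : Set ℕ) : Set ℕ :=
  {x | ∀ y ∈ I, x + 2 ≤ y ∨ y + 2 ≤ x}

theorem exists_consecutiveIn_around {A : Set ℕ} {p q lo hi : ℕ} (hp : p ∈ A) (hplo : p ≤ lo)
    (hq : q ∈ A) (hhiq : hi ≤ q) (hlohi : lo < hi) (hA : ∀ z ∈ A, ¬(lo < z ∧ z < hi)) :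
    ∃ r r', ConsecutiveIn A r r' ∧ r ≤ lo ∧ hi ≤ r' := by
  classical
  have hex : ∃ z, hi ≤ z ∧ z ∈ A := ⟨q, hhiq, hq⟩
  refine ⟨Nat.findGreatest (· ∈ A) lo, Nat.find hex,
    ⟨Nat.findGreatest_spec hplo hp, (Nat.find_spec hex).2,
      (Nat.findGreatest_le lo).trans_lt (hlohi.trans_le (Nat.find_spec hex).1), ?_⟩,
    Nat.findGreatest_le lo, (Nat.find_spec hex).1⟩
  rintro z hz ⟨hrz, hzr'⟩
  rcases le_or_gt z lo with hzlo | hloz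
  · exact (Nat.le_findGreatest hzlo hz).not_gt hrz
  rcases lt_or_ge z hi with hzhi | hhiz
  · exact hA z hz ⟨hloz, hzhi⟩
  · exact Nat.find_min hex hzr' ⟨hhiz, hz⟩

theorem exists_near_of_consecutiveIn_le_add_two {S : Set ℕ}
    (hS : ∀ u w, ConsecutiveIn S u w → w ≤ u + 2) {a b z : ℕ} (ha : a ∈ S) (hb : b ∈ S)
    (haz : a ≤ z) (hzb : z ≤ b) : ∃ s ∈ S, s ≤ z ∧ z ≤ s + 1 := by
  rcases hzb.eq_or_lt with rfl | hzb
  · exact ⟨z, hb, le_rfl, z.le_succ⟩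
  obtain ⟨u, w, huw, huz, hzw⟩ :=
    exists_consecutiveIn_around ha haz hb hzb z.lt_succ_self (fun y _ h => by omega)
  exact ⟨u, huw.1, huz, by have := hS u w huw; omega⟩

theorem ncard_Ioo_le_three_mul {S : Set ℕ} (hS : S.Finite) {x x' : ℕ}
    (h : ∀ t ∈ Set.Ioo x x', ∃ u ∈ S, t ≤ u + 1 ∧ u ≤ t + 1) : x' - x - 1 ≤ 3 * S.ncard := by
  have hcover : Set.Ioo x x' ⊆ ⋃ u ∈ hS.toFinset, Set.Icc (u - 1) (u + 1) := by
    intro t ht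
    obtain ⟨u, hu, htu, hut⟩ := h t ht
    exact Set.mem_biUnion (hS.mem_toFinset.mpr hu) ⟨by omega, htu⟩
  calc x' - x - 1 = (Set.Ioo x x').ncard := (Set.ncard_Ioo_nat x x').symm
    _ ≤ (⋃ u ∈ hS.toFinset, Set.Icc (u - 1) (u + 1)).ncard :=
        Set.ncard_le_ncard hcover (hS.toFinset.finite_toSet.biUnion fun _ _ => Set.finite_Icc _ _)
    _ ≤ ∑ u ∈ hS.toFinset, (Set.Icc (u - 1) (u + 1)).ncard := Finset.set_ncard_biUnion_le _ _
    _ ≤ ∑ _u ∈ hS.toFinset, 3 :=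
        Finset.sum_le_sum fun u _ => by simp only [Set.ncard_Icc_nat]; omega
    _ = 3 * S.ncard := by
        rw [Finset.sum_const, smul_eq_mul, mul_comm, Set.ncard_eq_toFinset_card S hS]

theorem U₁_of_gapUnbounded {R I : Set ℕ}
    (hstar : ∀ u w, ConsecutiveIn I u w → (∃ r ∈ R, u < r ∧ r < w) ∨ w ≤ u + 2)
    (h : GapUnbounded R I) : U₁ (R ∪ farFrom I) := by
  intro k
  obtain ⟨r, r', hrr', hk⟩ := h (k + 1)
  set S := {x ∈ I | r < x ∧ x < r'}
  have hSfin : S.Finite := (Set.finite_Ioo r r').subset fun _ hx => hx.2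
  have hSne : S.Nonempty := Set.nonempty_of_ncard_ne_zero (by omega)
  set a := sInf S
  set b := sSup S
  have ha : a ∈ S := Nat.sInf_mem hSne
  have hb : b ∈ S := Nat.sSup_mem hSne hSfin.bddAbove
  have hSab : S ⊆ Set.Icc a b := fun z hz => ⟨Nat.sInf_le hz, le_csSup hSfin.bddAbove hz⟩
  have hab : a ≤ b := (hSab ha).2
  have hgaps : ∀ u w, ConsecutiveIn S u w → w ≤ u + 2 := by
    rintro u w ⟨⟨hu, hru, -⟩, ⟨hw, -, hwr'⟩, huw, hbtw⟩
    have hI : ConsecutiveIn I u w :=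
      ⟨hu, hw, huw, fun z hz hzb => hbtw z ⟨hz, by omega, by omega⟩ hzb⟩
    rcases hstar u w hI with ⟨ρ, hρ, hρu, hρw⟩ | hle
    · exact (hrr'.2.2.2 ρ hρ ⟨by omega, by omega⟩).elim
    · exact hle
  have hnoX : ∀ z ∈ R ∪ farFrom I, ¬(a - 1 < z ∧ z < b + 1) := by
    rintro z hz ⟨haz, hzb⟩
    obtain ⟨s, ⟨hs, -⟩, hsz, hzs⟩ :=
      exists_near_of_consecutiveIn_le_add_two hgaps ha hb (z := z) (by omega) (by omega)
    rcases hz with hz | hz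
    · exact hrr'.2.2.2 z hz ⟨by have := ha.2.1; omega, by have := hb.2.2; omega⟩
    · rcases hz s hs with h | h <;> omega
  obtain ⟨x, x', hxx', hx, hx'⟩ := exists_consecutiveIn_around (Or.inl hrr'.1)
    (by have := ha.2.1; omega : r ≤ a - 1) (Or.inl hrr'.2.1) (by have := hb.2.2; omega)
    (by omega) hnoX
  have hcard : S.ncard ≤ b + 1 - a := by
    simpa using Set.ncard_le_ncard hSab (Set.finite_Icc a b)
  exact ⟨x, x', hxx', by omega⟩

theorem gapUnbounded_of_U₁ {R I : Set ℕ} (hR : R.Infinite) (hdisj : R ∩ I = ∅)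
    (h : U₁ (R ∪ farFrom I)) : GapUnbounded R I := by
  intro k
  obtain ⟨r₀, hr₀⟩ := hR.nonempty
  -- the summand `r₀` puts a point of `R` to the left of the gap
  obtain ⟨x, x', ⟨hx, hx', hxx', hnoX⟩, hlong⟩ := h (3 * k + r₀ + 1)
  have hnotI : ∀ z ∈ R ∪ farFrom I, z ∉ I := by
    rintro z (hz | hz) hzI
    · exact (Set.eq_empty_iff_forall_notMem.mp hdisj) z ⟨hz, hzI⟩
    · rcases hz z hzI with h | h <;> omega
  set S := {u ∈ I | x < u ∧ u < x'}
  have hnear : ∀ t ∈ Set.Ioo x x', ∃ u ∈ S, t ≤ u + 1 ∧ u ≤ t + 1 := by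
    intro t ht
    have ⟨hxt, htx'⟩ := ht
    obtain ⟨u, hu, hut⟩ : ∃ u ∈ I, ¬(t + 2 ≤ u ∨ u + 2 ≤ t) := by
      by_contra! hfar
      exact hnoX t (Or.inr hfar) ht
    have hux : u ≠ x := fun h => hnotI x hx (h ▸ hu)
    have hux' : u ≠ x' := fun h => hnotI x' hx' (h ▸ hu)
    exact ⟨u, ⟨hu, by omega, by omega⟩, by omega, by omega⟩
  have hcard := ncard_Ioo_le_three_mul ((Set.finite_Ioo x x').subset fun _ hu => hu.2) hnear
  have hr₀x : r₀ ≤ x := by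
    by_contra hlt
    exact hnoX r₀ (Or.inl hr₀) ⟨by omega, by omega⟩
  obtain ⟨q, hq, hx'q⟩ := hR.exists_gt x'
  obtain ⟨r, r', hrr', hrx, hx'r'⟩ := exists_consecutiveIn_around hr₀ hr₀x hq hx'q.le hxx'
    fun z hz => hnoX z (Or.inl hz)
  refine ⟨r, r', hrr', ?_⟩
  calc k ≤ S.ncard := by omega
    _ ≤ _ := Set.ncard_le_ncard (by rintro u ⟨hu, h1, h2⟩; exact ⟨hu, by omega, by omega⟩)
        ((Set.finite_Ioo r r').subset fun _ hu => hu.2)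

theorem stmt11 (R I : Set ℕ) (hR : R.Infinite) (hdisj : R ∩ I = ∅)
    (hstar : ∀ u ∈ I, ∀ w ∈ I, u < w → (∀ z ∈ I, ¬(u < z ∧ z < w)) →
      ((∃ r ∈ R, u < r ∧ r < w) ∨ w ≤ u + 2)) :
    GapUnbounded R I ↔
      U₁ (R ∪ {x : ℕ | ∀ y ∈ I, x + 2 ≤ y ∨ y + 2 ≤ x}) :=
  ⟨U₁_of_gapUnbounded fun u w ⟨hu, hw, huw, hbtw⟩ => hstar u hu w hw huw hbtw,
    gapUnbounded_of_U₁ hR hdisj⟩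
end
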